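/- For every a : ℤ² → ℝ with sup_k (1+|k|)^N |a_k| < ∞ for every N ∈ ℕ, the following summation-by-parts identity holds: (1/2) Σ_{k∈ℤ²₊} k₂ (k₁ + 1/2) [ (1 − 1/|k|) a_k² − (1 − 1/|k+2e|) a_k a_{k+2e} − (1 − 1/|k+e|) a_{k+e}² + (1 − 1/|k−e|) a_{k+e} a_{k−e} ] = (1/4) Σ_{k₂ ≥ 1} k₂ Σ_{k₁ ∈ ℤ} [ (1 − 1/|k−e|) a_{k−e}² + (1 − 1/|k+e|) a_{k+e}² + 2( (k₁ + 1/2)(1 − 1/|k−e|) − (k₁ − 1/2)(1 − 1/|k+e|) ) a_{k−e} a_{k+e} ], where k = (k₁,k₂) and both sides converge absolutely. -/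

import Mathlib

open scoped BigOperators

noncomputable section

/-- Euclidean norm of a lattice point `k ∈ ℤ²`. -/
def znorm (k : ℤ × ℤ) : ℝ := Real.sqrt ((k.1 : ℝ) ^ 2 + (k.2 : ℝ) ^ 2)

/-- Wedge product `l ∧ m = l₁ m₂ − l₂ m₁`. -/
def wedge (l m : ℤ × ℤ) : ℝ := ((l.1 * m.2 - l.2 * m.1 : ℤ) : ℝ)

/-- The summand of the left-hand side of the summation-by-parts identity. -/
def sbpLHS (a : ℤ × ℤ → ℝ) (k : ℤ × ℤ) : ℝ :=
  (k.2 : ℝ) * ((k.1 : ℝ) + 1 / 2) *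
    ((1 - 1 / znorm k) * a k ^ 2 -
      (1 - 1 / znorm (k + (2, 0))) * a k * a (k + (2, 0)) -
      (1 - 1 / znorm (k + (1, 0))) * a (k + (1, 0)) ^ 2 +
      (1 - 1 / znorm (k - (1, 0))) * a (k + (1, 0)) * a (k - (1, 0)))

/-- The summand of the right-hand side of the summation-by-parts identity. -/
def sbpRHS (a : ℤ × ℤ → ℝ) (k₁ k₂ : ℤ) : ℝ :=
  (1 - 1 / znorm ((k₁, k₂) - (1, 0))) * a ((k₁, k₂) - (1, 0)) ^ 2 +
    (1 - 1 / znorm ((k₁, k₂) + (1, 0))) * a ((k₁, k₂) + (1, 0)) ^ 2 +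
    2 * (((k₁ : ℝ) + 1 / 2) * (1 - 1 / znorm ((k₁, k₂) - (1, 0))) -
        ((k₁ : ℝ) - 1 / 2) * (1 - 1 / znorm ((k₁, k₂) + (1, 0)))) *
      a ((k₁, k₂) - (1, 0)) * a ((k₁, k₂) + (1, 0))

/-!
For a fixed row `k₂`, the summand of the left-hand side satisfies the Abel-summation identity
`2 L(j, k₂) = k₂ R(j + 1, k₂) + G(j, k₂) - G(j + 1, k₂)` for an explicit weight `G`
(`sbpTelescope`), so summing over `j` the telescoping part vanishes and each row of the left-hand
side equals half of `k₂ Σⱼ R(j, k₂)`; summing over the rows (Fubini) gives the identity.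
All series converge absolutely because `L`, `k₂ R` and `G` decay rapidly: rapidly decreasing
functions on `ℤ²` are stable under shifts, products and multiplication by polynomially bounded
factors, and the coefficients `1 - 1 / |k|` are bounded by `1`.
-/

theorem tsum_sub_comp_add_eq_zero {ι α : Type*} [AddGroup ι] [AddCommGroup α]
    [TopologicalSpace α] [IsTopologicalAddGroup α] [T2Space α] {f : ι → α} (hf : Summable f)
    (d : ι) :
    ∑' i, (f i - f (i + d)) = 0 := by
  rw [hf.tsum_sub (g := fun i => f (i + d)) ((Equiv.addRight d).summable_iff.mpr hf)]
  exact sub_eq_zero.mpr ((Equiv.addRight d).tsum_eq f).symm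

theorem tsum_ite_snd {β γ : Type*} {f : β × γ → ℝ} (hf : Summable f) (p : γ → Prop)
    [DecidablePred p] :
    ∑' k, (if p k.2 then f k else 0) = ∑' y, if p y then ∑' x, f (x, y) else 0 := by
  have hp : Summable fun k : β × γ => if p k.2 then f k else 0 :=
    (hf.indicator {k | p k.2}).congr fun k => by simp [Set.indicator_apply]
  rw [← (Equiv.prodComm γ β).tsum_eq]
  refine hp.prod_symm.tsum_prod.trans (tsum_congr fun y => ?_)
  split_ifs <;> simp_all

open Complex in
lemma znorm_eq_norm (k : ℤ × ℤ) :
    znorm k = ‖((k.1 : ℝ) : ℂ) + ((k.2 : ℝ) : ℂ) * I‖ := by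
  rw [Complex.norm_add_mul_I, znorm]

lemma znorm_nonneg (k : ℤ × ℤ) : 0 ≤ znorm k := Real.sqrt_nonneg _

lemma znorm_neg (k : ℤ × ℤ) : znorm (-k) = znorm k := by
  simp [znorm]

open Complex in
lemma znorm_add_le (k l : ℤ × ℤ) : znorm (k + l) ≤ znorm k + znorm l := by
  simp only [znorm_eq_norm, Prod.fst_add, Prod.snd_add, Int.cast_add, ofReal_add]
  calc _ = ‖(((k.1 : ℝ) : ℂ) + ((k.2 : ℝ) : ℂ) * I) +
        (((l.1 : ℝ) : ℂ) + ((l.2 : ℝ) : ℂ) * I)‖ := by ring_nf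
    _ ≤ _ := norm_add_le _ _

lemma abs_fst_le_znorm (k : ℤ × ℤ) : |(k.1 : ℝ)| ≤ znorm k := by
  rw [znorm, ← Real.sqrt_sq_eq_abs]
  exact Real.sqrt_le_sqrt (by nlinarith [sq_nonneg (k.2 : ℝ)])

lemma abs_snd_le_znorm (k : ℤ × ℤ) : |(k.2 : ℝ)| ≤ znorm k := by
  rw [znorm, ← Real.sqrt_sq_eq_abs]
  exact Real.sqrt_le_sqrt (by nlinarith [sq_nonneg (k.1 : ℝ)])

lemma znorm_eq_zero_or_one_le (k : ℤ × ℤ) : znorm k = 0 ∨ 1 ≤ znorm k := by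
  have hn : (0 : ℤ) ≤ k.1 ^ 2 + k.2 ^ 2 := by positivity
  rcases hn.eq_or_lt with h | h
  · left
    rw [znorm, ← Int.cast_pow, ← Int.cast_pow, ← Int.cast_add, ← h, Int.cast_zero,
      Real.sqrt_zero]
  · right
    rw [znorm, Real.one_le_sqrt]
    exact_mod_cast h

-- At `k = 0` the coefficient is `1`, since `1 / 0 = 0`.
lemma abs_one_sub_one_div_znorm_le (k : ℤ × ℤ) : |1 - 1 / znorm k| ≤ 1 := by
  rcases znorm_eq_zero_or_one_le k with h | h
  · simp [h]
  · have : 1 / znorm k ≤ 1 := (div_le_one (by linarith)).mpr h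
    have : 0 < 1 / znorm k := by positivity
    rw [abs_le]; constructor <;> linarith

def RapidDecay (f : ℤ × ℤ → ℝ) : Prop :=
  ∀ N : ℕ, ∃ M : ℝ, ∀ k : ℤ × ℤ, (1 + znorm k) ^ N * |f k| ≤ M

namespace RapidDecay

variable {f g : ℤ × ℤ → ℝ}

lemma add (hf : RapidDecay f) (hg : RapidDecay g) : RapidDecay fun k => f k + g k := by
  intro N
  obtain ⟨M, hM⟩ := hf N
  obtain ⟨M', hM'⟩ := hg N
  refine ⟨M + M', fun k => ?_⟩
  have hw : 0 ≤ (1 + znorm k) ^ N := pow_nonneg (by linarith [znorm_nonneg k]) N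
  calc (1 + znorm k) ^ N * |f k + g k| ≤ (1 + znorm k) ^ N * (|f k| + |g k|) := by
        gcongr; exact abs_add_le _ _
    _ ≤ M + M' := by linarith [hM k, hM' k]

lemma neg (hf : RapidDecay f) : RapidDecay fun k => -f k :=
  fun N => by simpa only [abs_neg] using hf N

lemma sub (hf : RapidDecay f) (hg : RapidDecay g) : RapidDecay fun k => f k - g k := by
  simpa only [sub_eq_add_neg] using hf.add hg.neg

lemma mul_of_abs_le_pow (hf : RapidDecay f) {C : ℝ} {m : ℕ}
    (hg : ∀ k, |g k| ≤ C * (1 + znorm k) ^ m) : RapidDecay fun k => g k * f k := by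
  intro N
  obtain ⟨M, hM⟩ := hf (N + m)
  refine ⟨C * M, fun k => ?_⟩
  have hw : 0 < 1 + znorm k := by linarith [znorm_nonneg k]
  have hC : 0 ≤ C := nonneg_of_mul_nonneg_left ((abs_nonneg _).trans (hg k)) (by positivity)
  calc (1 + znorm k) ^ N * |g k * f k| = |g k| * ((1 + znorm k) ^ N * |f k|) := by
        rw [abs_mul]; ring
    _ ≤ C * (1 + znorm k) ^ m * ((1 + znorm k) ^ N * |f k|) := by gcongr; exact hg k
    _ = C * ((1 + znorm k) ^ (N + m) * |f k|) := by ring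
    _ ≤ C * M := by gcongr; exact hM k

lemma mul_of_abs_le (hf : RapidDecay f) {C : ℝ} (hg : ∀ k, |g k| ≤ C) :
    RapidDecay fun k => g k * f k :=
  hf.mul_of_abs_le_pow (m := 0) fun k => by simpa using hg k

lemma mul (hf : RapidDecay f) (hg : RapidDecay g) : RapidDecay fun k => f k * g k := by
  obtain ⟨M, hM⟩ := hf 0
  exact hg.mul_of_abs_le (C := M) fun k => by simpa using hM k

lemma sq (hf : RapidDecay f) : RapidDecay fun k => f k ^ 2 := by
  simpa only [_root_.sq] using hf.mul hf

lemma snd_mul (hf : RapidDecay f) : RapidDecay fun k => (k.2 : ℝ) * f k :=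
  hf.mul_of_abs_le_pow (C := 1) (m := 1) fun k => by
    rw [one_mul, pow_one]
    linarith [abs_snd_le_znorm k, znorm_nonneg k]

lemma comp_add_right (hf : RapidDecay f) (d : ℤ × ℤ) : RapidDecay fun k => f (k + d) := by
  intro N
  obtain ⟨M, hM⟩ := hf N
  refine ⟨(1 + znorm d) ^ N * M, fun k => ?_⟩
  have hw : 0 ≤ 1 + znorm k := by linarith [znorm_nonneg k]
  have hshift : 1 + znorm k ≤ (1 + znorm d) * (1 + znorm (k + d)) := by
    have := znorm_add_le (k + d) (-d)
    rw [add_neg_cancel_right, znorm_neg] at this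
    nlinarith [znorm_nonneg d, znorm_nonneg (k + d)]
  calc (1 + znorm k) ^ N * |f (k + d)|
      ≤ ((1 + znorm d) * (1 + znorm (k + d))) ^ N * |f (k + d)| := by gcongr
    _ = (1 + znorm d) ^ N * ((1 + znorm (k + d)) ^ N * |f (k + d)|) := by
        rw [mul_pow]; ring
    _ ≤ (1 + znorm d) ^ N * M := by
        gcongr
        · exact pow_nonneg (by linarith [znorm_nonneg d]) N
        · exact hM _

lemma comp_sub_right (hf : RapidDecay f) (d : ℤ × ℤ) : RapidDecay fun k => f (k - d) := by
  simpa only [sub_eq_add_neg] using hf.comp_add_right (-d)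

lemma summable (hf : RapidDecay f) : Summable f := by
  obtain ⟨M, hM⟩ := hf 3
  set e := (finTwoArrowEquiv ℤ).symm
  have hsum : Summable fun k => M * ‖e k‖ ^ (-3 : ℝ) :=
    ((e.summable_iff (f := fun x => ‖x‖ ^ (-3 : ℝ))).mpr
      (EisensteinSeries.summable_one_div_norm_rpow (by norm_num))).mul_left M
  refine Summable.of_norm_bounded_eventually hsum ?_
  filter_upwards [Filter.eventually_cofinite_ne 0] with k hk
  have hpos : 0 < ‖e k‖ :=
    norm_pos_iff.mpr fun h => hk (e.injective (h.trans (by ext i; fin_cases i <;> simp [e])))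
  have hle : ‖e k‖ ≤ 1 + znorm k := by
    refine (pi_norm_le_iff_of_nonneg (by linarith [znorm_nonneg k])).mpr fun i => ?_
    fin_cases i <;> simp [e, Int.norm_eq_abs] <;>
      linarith [abs_fst_le_znorm k, abs_snd_le_znorm k]
  rw [Real.norm_eq_abs, Real.rpow_neg (norm_nonneg _), Real.rpow_ofNat, ← div_eq_mul_inv,
    le_div_iff₀ (by positivity), mul_comm]
  exact le_trans (by gcongr) (hM k)

end RapidDecay

def sbpTelescope (a : ℤ × ℤ → ℝ) (k : ℤ × ℤ) : ℝ :=
  (k.2 : ℝ) * (2 * (k.1 : ℝ) * (1 - 1 / znorm k) * a k ^ 2 +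
    (1 - 1 / znorm (k + (1, 0))) * a (k + (1, 0)) ^ 2 +
    (2 * (k.1 : ℝ) + 1) * (1 - 1 / znorm (k - (1, 0))) * a (k - (1, 0)) * a (k + (1, 0)))

section

variable {a : ℤ × ℤ → ℝ}

lemma rapidDecay_sbpLHS (ha : RapidDecay a) : RapidDecay (sbpLHS a) := by
  have hc (k : ℤ × ℤ) := abs_one_sub_one_div_znorm_le k
  have h₁ := ha.comp_add_right (1, 0)
  have h₂ := ha.comp_add_right (2, 0)
  have hₘ := ha.comp_sub_right (1, 0)
  refine RapidDecay.mul_of_abs_le_pow (C := 1) (m := 2) ?_ fun k => ?_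
  · exact (((ha.sq.mul_of_abs_le hc).sub ((ha.mul_of_abs_le fun k => hc _).mul h₂)).sub
      (h₁.sq.mul_of_abs_le fun k => hc _)).add ((h₁.mul_of_abs_le fun k => hc _).mul hₘ)
  · have := abs_fst_le_znorm k
    have := abs_snd_le_znorm k
    rw [abs_le] at *
    constructor <;> nlinarith

lemma rapidDecay_sbpRHS (ha : RapidDecay a) : RapidDecay fun k => sbpRHS a k.1 k.2 := by
  have hₚ := ha.comp_add_right (1, 0)
  have hₘ := ha.comp_sub_right (1, 0)
  simp only [sbpRHS, Prod.mk.eta]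
  refine ((hₘ.sq.mul_of_abs_le fun k => abs_one_sub_one_div_znorm_le _).add
    (hₚ.sq.mul_of_abs_le fun k => abs_one_sub_one_div_znorm_le _)).add
    ((hₘ.mul_of_abs_le_pow (C := 4) (m := 1) fun k => ?_).mul hₚ)
  have := abs_fst_le_znorm k
  have := abs_one_sub_one_div_znorm_le (k + (1, 0))
  have := abs_one_sub_one_div_znorm_le (k - (1, 0))
  rw [abs_le] at *
  constructor <;> nlinarith

lemma rapidDecay_sbpTelescope (ha : RapidDecay a) : RapidDecay (sbpTelescope a) := by
  have hₚ := ha.comp_add_right (1, 0)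
  have hₘ := ha.comp_sub_right (1, 0)
  refine RapidDecay.snd_mul (((ha.sq.mul_of_abs_le_pow (C := 2) (m := 1) fun k => ?_).add
    (hₚ.sq.mul_of_abs_le fun k => abs_one_sub_one_div_znorm_le _)).add
    ((hₘ.mul_of_abs_le_pow (C := 3) (m := 1) fun k => ?_).mul hₚ)) <;>
  · have := abs_fst_le_znorm k
    have := abs_one_sub_one_div_znorm_le k
    have := abs_one_sub_one_div_znorm_le (k - (1, 0))
    rw [abs_le] at *
    constructor <;> nlinarith

lemma two_mul_sbpLHS (j k₂ : ℤ) :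
    2 * sbpLHS a (j, k₂) = k₂ * sbpRHS a (j + 1) k₂ +
      (sbpTelescope a (j, k₂) - sbpTelescope a (j + 1, k₂)) := by
  simp only [sbpLHS, sbpRHS, sbpTelescope, Prod.mk_add_mk, Prod.mk_sub_mk, add_zero, sub_zero,
    add_sub_cancel_right, add_assoc, Int.cast_add, Int.cast_one]
  norm_num
  ring

lemma two_mul_tsum_sbpLHS_row (ha : RapidDecay a) (k₂ : ℤ) :
    2 * ∑' j : ℤ, sbpLHS a (j, k₂) = k₂ * ∑' j : ℤ, sbpRHS a j k₂ := by
  have hR : Summable fun j => sbpRHS a j k₂ :=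
    (rapidDecay_sbpRHS ha).summable.prod_symm.prod_factor k₂
  have hG : Summable fun j => sbpTelescope a (j, k₂) :=
    (rapidDecay_sbpTelescope ha).summable.prod_symm.prod_factor k₂
  have hG' : Summable fun j => sbpTelescope a (j + 1, k₂) :=
    hG.comp_injective (add_left_injective 1)
  have hR' : Summable fun j => sbpRHS a (j + 1) k₂ := hR.comp_injective (add_left_injective 1)
  calc 2 * ∑' j : ℤ, sbpLHS a (j, k₂)
      = ∑' j : ℤ, (k₂ * sbpRHS a (j + 1) k₂ +
          (sbpTelescope a (j, k₂) - sbpTelescope a (j + 1, k₂))) := by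
        rw [← tsum_mul_left]; exact tsum_congr fun j => two_mul_sbpLHS j k₂
    _ = k₂ * ∑' j : ℤ, sbpRHS a (j + 1) k₂ := by
        rw [(hR'.mul_left _).tsum_add (hG.sub hG'), tsum_mul_left,
          tsum_sub_comp_add_eq_zero hG 1, add_zero]
    _ = k₂ * ∑' j : ℤ, sbpRHS a j k₂ :=
        congrArg _ ((Equiv.addRight (1 : ℤ)).tsum_eq fun j => sbpRHS a j k₂)

end

/-- Summation-by-parts identity for the main term `Σ`:
`(1/2) Σ_{k∈ℤ²₊} k₂(k₁+1/2)[...] = (1/4) Σ_{k₂≥1} k₂ Σ_{k₁}[...]`,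
with both sides converging absolutely. -/
theorem summation_by_parts (a : ℤ × ℤ → ℝ)
    (hdec : ∀ N : ℕ, ∃ M : ℝ, ∀ k : ℤ × ℤ, (1 + znorm k) ^ N * |a k| ≤ M) :
    (Summable fun k : ℤ × ℤ => if 1 ≤ k.2 then |sbpLHS a k| else 0) ∧
    (∀ k₂ : ℤ, 1 ≤ k₂ → Summable fun k₁ : ℤ => |sbpRHS a k₁ k₂|) ∧
    (Summable fun k₂ : ℤ =>
      if 1 ≤ k₂ then |(k₂ : ℝ) * ∑' k₁ : ℤ, sbpRHS a k₁ k₂| else 0) ∧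
    (1 / 2) * (∑' k : ℤ × ℤ, if 1 ≤ k.2 then sbpLHS a k else 0) =
      (1 / 4) * ∑' k₂ : ℤ, if 1 ≤ k₂ then (k₂ : ℝ) * ∑' k₁ : ℤ, sbpRHS a k₁ k₂ else 0 := by
  have hL := (rapidDecay_sbpLHS hdec).summable
  have hR := (rapidDecay_sbpRHS hdec).summable
  have hkR := (rapidDecay_sbpRHS hdec).snd_mul.summable
  refine ⟨?_, fun k₂ _ => hR.abs.prod_symm.prod_factor k₂, ?_, ?_⟩
  · exact hL.abs.of_norm_bounded fun k => by split_ifs <;> simp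
  · refine hkR.abs.prod_symm.prod.of_norm_bounded fun k₂ => ?_
    split_ifs
    · rw [Real.norm_eq_abs, abs_abs, ← tsum_mul_left]
      exact norm_tsum_le_tsum_norm (hkR.norm.prod_symm.prod_factor k₂)
    · simpa using tsum_nonneg fun _ => by positivity
  · rw [tsum_ite_snd hL, ← tsum_mul_left, ← tsum_mul_left]
    refine tsum_congr fun k₂ => ?_
    split_ifs
    · linarith [two_mul_tsum_sbpLHS_row hdec k₂]
    · simp
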